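/- Let E be a symmetric Banach function space on I=[0,α) with the Fatou property. If x∈E is an LLUKM point (point of lower local uniform K-monotonicity), then x*(∞)=0. -/

import Mathlib

open MeasureTheory Filter Topology Set
open scoped ENNReal

noncomputable section

/-- Lebesgue measure restricted to the interval `I = [0, α)`, where `α : ℝ≥0∞`. -/
def muI (α : ℝ≥0∞) : Measure ℝ :=
  volume.restrict {s : ℝ | 0 ≤ s ∧ ENNReal.ofReal s < α}

/-- The distribution function `d_x(λ) = μ{s ∈ I : |x(s)| > λ}`. -/
def distr (α : ℝ≥0∞) (x : ℝ → ℝ) (lam : ℝ) : ℝ≥0∞ :=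
  muI α {s : ℝ | lam < |x s|}

/-- The decreasing rearrangement `x*(t) = inf{λ > 0 : d_x(λ) ≤ t}`. -/
def rearr (α : ℝ≥0∞) (x : ℝ → ℝ) (t : ℝ) : ℝ :=
  sInf {lam : ℝ | 0 < lam ∧ distr α x lam ≤ ENNReal.ofReal t}

/-- The maximal function `x**(t) = (1/t) ∫₀ᵗ x*(s) ds`. -/
def maxf (α : ℝ≥0∞) (x : ℝ → ℝ) (t : ℝ) : ℝ :=
  (∫ s in Set.Ioc (0 : ℝ) t, rearr α x s) / t

/-- The Hardy–Littlewood–Pólya relation `x ≺ y`, i.e. `x**(t) ≤ y**(t)` for all `t > 0`. -/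
def HLP (α : ℝ≥0∞) (x y : ℝ → ℝ) : Prop :=
  ∀ t : ℝ, 0 < t → maxf α x t ≤ maxf α y t

/-- `x*(∞) = 0`: automatic when `α ≠ ∞`, and `lim_{t→∞} x*(t) = 0` when `α = ∞`. -/
def rearrInftyZero (α : ℝ≥0∞) (x : ℝ → ℝ) : Prop :=
  α = ∞ → Tendsto (rearr α x) atTop (𝓝 0)

/-- A symmetric Banach function space on `[0, α)` with the Fatou property. -/
structure SymmetricBFS (α : ℝ≥0∞) where
  /-- membership in the space `E` -/
  Mem : (ℝ → ℝ) → Prop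
  /-- the norm of `E` -/
  N : (ℝ → ℝ) → ℝ
  mem_aemeasurable : ∀ ⦃x⦄, Mem x → AEMeasurable x (muI α)
  zero_mem : Mem 0
  add_mem : ∀ ⦃x y⦄, Mem x → Mem y → Mem (x + y)
  smul_mem : ∀ (c : ℝ) ⦃x⦄, Mem x → Mem (c • x)
  norm_nonneg' : ∀ x, 0 ≤ N x
  norm_zero' : N 0 = 0
  norm_add_le : ∀ x y, N (x + y) ≤ N x + N y
  norm_smul' : ∀ (c : ℝ) (x : ℝ → ℝ), N (c • x) = |c| * N x
  norm_eq_zero_iff : ∀ ⦃x⦄, Mem x → (N x = 0 ↔ (∀ᵐ s ∂(muI α), x s = 0))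
  /-- the ideal (Banach function space) property -/
  ideal : ∀ ⦃x y⦄, AEMeasurable x (muI α) → Mem y →
    (∀ᵐ s ∂(muI α), |x s| ≤ |y s|) → Mem x ∧ N x ≤ N y
  /-- there is a strictly positive element -/
  exists_strictPos : ∃ x, Mem x ∧ ∀ᵐ s ∂(muI α), 0 < x s
  /-- norm completeness -/
  complete : ∀ u : ℕ → ℝ → ℝ, (∀ n, Mem (u n)) →
    (∀ ε : ℝ, 0 < ε → ∃ n₀ : ℕ, ∀ m n, n₀ ≤ m → n₀ ≤ n → N (u m - u n) < ε) →
    ∃ x, Mem x ∧ Tendsto (fun n => N (u n - x)) atTop (𝓝 0)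
  /-- symmetry: equimeasurable functions have equal norms -/
  symmetric : ∀ ⦃x y⦄, AEMeasurable x (muI α) → Mem y →
    distr α x = distr α y → Mem x ∧ N x = N y
  /-- the Fatou property -/
  fatou : ∀ (u : ℕ → ℝ → ℝ) (x : ℝ → ℝ), (∀ n, Mem (u n)) →
    AEMeasurable x (muI α) →
    (∀ n, ∀ᵐ s ∂(muI α), 0 ≤ u n s) →
    (∀ n, ∀ᵐ s ∂(muI α), u n s ≤ u (n + 1) s) →
    (∀ᵐ s ∂(muI α), Tendsto (fun n => u n s) atTop (𝓝 (x s))) →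
    (∃ C : ℝ, ∀ n, N (u n) ≤ C) →
    Mem x ∧ Tendsto (fun n => N (u n)) atTop (𝓝 (N x))

variable {α : ℝ≥0∞}

/-- The fundamental function `φ(t) = ‖χ_{(0,t)}‖_E`. -/
def SymmetricBFS.fund (E : SymmetricBFS α) (t : ℝ) : ℝ :=
  E.N (Set.indicator (Set.Ioo 0 t) fun _ => (1 : ℝ))

/-- `x` is a point of lower local uniform `K`-monotonicity (`LLUKM` point). -/
def SymmetricBFS.IsLLUKMPoint (E : SymmetricBFS α) (x : ℝ → ℝ) : Prop :=
  ∀ u : ℕ → ℝ → ℝ, (∀ n, E.Mem (u n)) → (∀ n, HLP α (u n) x) →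
    Tendsto (fun n => E.N (u n)) atTop (𝓝 (E.N x)) →
    Tendsto (fun n => E.N (rearr α (u n) - rearr α x)) atTop (𝓝 0)

/-- `x` is a point of upper local uniform `K`-monotonicity (`ULUKM` point). -/
def SymmetricBFS.IsULUKMPoint (E : SymmetricBFS α) (x : ℝ → ℝ) : Prop :=
  ∀ u : ℕ → ℝ → ℝ, (∀ n, E.Mem (u n)) → (∀ n, HLP α x (u n)) →
    Tendsto (fun n => E.N (u n)) atTop (𝓝 (E.N x)) →
    Tendsto (fun n => E.N (rearr α x - rearr α (u n))) atTop (𝓝 0)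

/-- `x` is a point of lower `K`-monotonicity (`LKM` point). -/
def SymmetricBFS.IsLKMPoint (E : SymmetricBFS α) (x : ℝ → ℝ) : Prop :=
  ∀ y : ℝ → ℝ, E.Mem y → HLP α y x → rearr α y ≠ rearr α x → E.N y < E.N x

/-- `x` is a point of order continuity. -/
def SymmetricBFS.IsOCPoint (E : SymmetricBFS α) (x : ℝ → ℝ) : Prop :=
  ∀ u : ℕ → ℝ → ℝ, (∀ n, E.Mem (u n)) →
    (∀ n, ∀ᵐ s ∂(muI α), 0 ≤ u n s ∧ u n s ≤ |x s|) →
    (∀ᵐ s ∂(muI α), Tendsto (fun n => u n s) atTop (𝓝 0)) →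
    Tendsto (fun n => E.N (u n)) atTop (𝓝 0)

/-- `x` is a point of `K`-order continuity. -/
def SymmetricBFS.IsKOCPoint (E : SymmetricBFS α) (x : ℝ → ℝ) : Prop :=
  ∀ u : ℕ → ℝ → ℝ, (∀ n, E.Mem (u n)) → (∀ n, HLP α (u n) x) →
    (∀ᵐ s ∂(muI α), Tendsto (fun n => rearr α (u n) s) atTop (𝓝 0)) →
    Tendsto (fun n => E.N (u n)) atTop (𝓝 0)

/-- `x` is an `H_g` point (Kadec–Klee point for global convergence in measure). -/
def SymmetricBFS.IsHgPoint (E : SymmetricBFS α) (x : ℝ → ℝ) : Prop :=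
  ∀ u : ℕ → ℝ → ℝ, (∀ n, E.Mem (u n)) →
    TendstoInMeasure (muI α) u atTop x →
    Tendsto (fun n => E.N (u n)) atTop (𝓝 (E.N x)) →
    Tendsto (fun n => E.N (u n - x)) atTop (𝓝 0)

/-- `x` is an `H_l` point (Kadec–Klee point for local convergence in measure). -/
def SymmetricBFS.IsHlPoint (E : SymmetricBFS α) (x : ℝ → ℝ) : Prop :=
  ∀ u : ℕ → ℝ → ℝ, (∀ n, E.Mem (u n)) →
    (∀ A : Set ℝ, muI α A < ∞ → TendstoInMeasure ((muI α).restrict A) u atTop x) →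
    Tendsto (fun n => E.N (u n)) atTop (𝓝 (E.N x)) →
    Tendsto (fun n => E.N (u n - x)) atTop (𝓝 0)

/-- A nonnegative `x` is an `LLUM` point (point of lower local uniform monotonicity). -/
def SymmetricBFS.IsLLUMPoint (E : SymmetricBFS α) (x : ℝ → ℝ) : Prop :=
  ∀ u : ℕ → ℝ → ℝ, (∀ n, E.Mem (u n)) →
    (∀ n, ∀ᵐ s ∂(muI α), 0 ≤ u n s ∧ u n s ≤ x s) →
    Tendsto (fun n => E.N (u n)) atTop (𝓝 (E.N x)) →
    Tendsto (fun n => E.N (u n - x)) atTop (𝓝 0)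

/-- A nonnegative `x` is a `ULUM` point (point of upper local uniform monotonicity). -/
def SymmetricBFS.IsULUMPoint (E : SymmetricBFS α) (x : ℝ → ℝ) : Prop :=
  ∀ u : ℕ → ℝ → ℝ, (∀ n, E.Mem (u n)) →
    (∀ n, ∀ᵐ s ∂(muI α), x s ≤ u n s) →
    Tendsto (fun n => E.N (u n)) atTop (𝓝 (E.N x)) →
    Tendsto (fun n => E.N (u n - x)) atTop (𝓝 0)

/-!
Suppose `α = ∞` and `x*(t) ≥ c > 0` for all `t > 0`. The truncations
`u_n = x* χ_(0,n+1)` satisfy `u_n* = u_n ≤ x*`, hence `u_n ≺ x`, and `‖u_n‖ → ‖x*‖ = ‖x‖` by the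
Fatou property and symmetry. But `|u_n* - x*| ≥ c χ_(n+1,∞)`, which is equimeasurable with the
constant `c`, so `‖u_n* - x*‖ ≥ ‖c‖ > 0` for every `n`, contradicting LLUKM.
-/

section Rearrangement

variable {x : ℝ → ℝ}

theorem distr_antitone : Antitone (distr α x) :=
  fun _ _ hab => measure_mono fun _ hs => hab.trans_lt hs

theorem rearr_nonneg (t : ℝ) : 0 ≤ rearr α x t :=
  Real.sInf_nonneg fun _ h => h.1.le

theorem rearr_le_of_distr_le {t lam : ℝ} (hlam : 0 < lam)
    (h : distr α x lam ≤ ENNReal.ofReal t) : rearr α x t ≤ lam :=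
  csInf_le (s := {lam | 0 < lam ∧ distr α x lam ≤ ENNReal.ofReal t}) ⟨0, fun _ h => h.1.le⟩
    ⟨hlam, h⟩

/-- With `sInf ∅ = 0` the rearrangement is `0` here, not `∞`. -/
theorem rearr_eq_zero_of_forall_distr_eq_top (h : ∀ lam, 0 < lam → distr α x lam = ∞) :
    rearr α x = 0 := by
  funext t
  rw [rearr, Pi.zero_apply]
  convert Real.sInf_empty using 2
  refine eq_empty_of_forall_notMem fun lam hmem => ?_
  obtain ⟨hlam, hle⟩ := hmem
  rw [h lam hlam, top_le_iff] at hle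
  exact ENNReal.ofReal_ne_top hle

theorem tendsto_distr_atTop_zero (hx : AEMeasurable x (muI α)) {lam₀ : ℝ}
    (h : distr α x lam₀ ≠ ∞) : Tendsto (distr α x) atTop (𝓝 0) := by
  have hempty : (⋂ lam : ℝ, {s | lam < |x s|}) = ∅ :=
    eq_empty_of_forall_notMem fun s hs => lt_irrefl |x s| (mem_iInter.1 hs |x s|)
  have := tendsto_measure_iInter_atTop (μ := muI α) (s := fun lam : ℝ => {s | lam < |x s|})
    (fun _ => nullMeasurableSet_lt aemeasurable_const hx.norm)
    (fun _ _ hab _ hs => hab.trans_lt hs) ⟨lam₀, h⟩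
  rwa [hempty, measure_empty] at this

theorem exists_distr_le (hd : Tendsto (distr α x) atTop (𝓝 0)) {t : ℝ} (ht : 0 < t) :
    ∃ lam, 0 < lam ∧ distr α x lam ≤ ENNReal.ofReal t :=
  ((eventually_gt_atTop 0).and (hd.eventually (ge_mem_nhds (ENNReal.ofReal_pos.2 ht)))).exists

theorem rearr_antitoneOn (hd : Tendsto (distr α x) atTop (𝓝 0)) :
    AntitoneOn (rearr α x) (Ioi 0) := fun _ ht _ _ htt' =>
  csInf_le_csInf ⟨0, fun _ h => h.1.le⟩ (exists_distr_le hd ht)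
    fun _ ⟨hlam, hle⟩ => ⟨hlam, hle.trans (ENNReal.ofReal_le_ofReal htt')⟩

theorem exists_lt_distr_of_lt_distr {a : ℝ≥0∞} {lam : ℝ} (h : a < distr α x lam) :
    ∃ lam', lam < lam' ∧ a < distr α x lam' := by
  set s : ℕ → Set ℝ := fun k => {s | lam + 1 / (k + 1) < |x s|}
  have hmono : Monotone s := fun k k' hkk' y (hy : lam + 1 / (k + 1) < |x y|) =>
    show lam + 1 / (k' + 1) < |x y| by linarith [Nat.one_div_le_one_div (α := ℝ) hkk']
  have hunion : (⋃ k, s k) = {s | lam < |x s|} := by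
    ext y
    simp only [s, mem_iUnion, mem_ofPred_eq]
    refine ⟨fun ⟨k, hk⟩ => (lt_add_of_pos_right lam Nat.one_div_pos_of_nat).trans hk, fun hy => ?_⟩
    obtain ⟨k, hk⟩ := exists_nat_one_div_lt (sub_pos.2 hy)
    exact ⟨k, by linarith⟩
  have := tendsto_measure_iUnion_atTop (μ := muI α) hmono
  rw [hunion] at this
  obtain ⟨k, hk⟩ := (this.eventually_const_lt h).exists
  exact ⟨_, lt_add_of_pos_right lam Nat.one_div_pos_of_nat, hk⟩

theorem lt_rearr_iff (hd : Tendsto (distr α x) atTop (𝓝 0)) {t lam : ℝ} (ht : 0 < t)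
    (hlam : 0 ≤ lam) : lam < rearr α x t ↔ ENNReal.ofReal t < distr α x lam := by
  constructor
  · refine fun h => lt_of_not_ge fun hle => h.not_ge ?_
    exact le_of_forall_gt_imp_ge_of_dense fun lam' hlam' =>
      rearr_le_of_distr_le (hlam.trans_lt hlam') ((distr_antitone hlam'.le).trans hle)
  · intro h
    obtain ⟨lam', hlam', hlt⟩ := exists_lt_distr_of_lt_distr h
    refine hlam'.trans_le (le_csInf (exists_distr_le hd ht) fun μ ⟨_, hμ⟩ => ?_)
    by_contra! hμlam
    exact (hlt.trans_le (distr_antitone hμlam.le)).not_ge hμ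

theorem distr_of_neg {lam : ℝ} (hlam : lam < 0) (f : ℝ → ℝ) : distr α f lam = muI α univ :=
  congrArg (muI α) (eq_univ_of_forall fun _ => hlam.trans_le (abs_nonneg _))

theorem setOf_lt_abs_indicator {S : Set ℝ} {g : ℝ → ℝ} {lam : ℝ} (hlam : 0 ≤ lam) :
    {s | lam < |S.indicator g s|} = S ∩ {s | lam < |g s|} := by
  ext s
  by_cases hs : s ∈ S <;> simp [hs, hlam]

theorem setOf_lt_rearr_inter_Ioi (hd : Tendsto (distr α x) atTop (𝓝 0)) {lam : ℝ}
    (hlam : 0 ≤ lam) :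
    {s | lam < |rearr α x s|} ∩ Ioi 0 = {s | 0 < s ∧ ENNReal.ofReal s < distr α x lam} := by
  ext s
  simp only [mem_inter_iff, mem_ofPred_eq, mem_Ioi, abs_of_nonneg (rearr_nonneg s)]
  exact ⟨fun ⟨h, hs⟩ => ⟨hs, (lt_rearr_iff hd hs hlam).1 h⟩,
    fun ⟨hs, h⟩ => ⟨(lt_rearr_iff hd hs hlam).2 h, hs⟩⟩

end Rearrangement

theorem tendsto_atTop_zero_of_antitoneOn {f : ℝ → ℝ} (hanti : AntitoneOn f (Ioi 0))
    (hf0 : ∀ t, 0 ≤ f t) (h : ∀ c, 0 < c → ∃ t, 0 < t ∧ f t < c) : Tendsto f atTop (𝓝 0) := by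
  refine tendsto_order.2
    ⟨fun a ha => Eventually.of_forall fun t => ha.trans_le (hf0 t), fun c hc => ?_⟩
  obtain ⟨t, ht, hft⟩ := h c hc
  filter_upwards [eventually_ge_atTop t] with s hs
  exact (hanti ht (ht.trans_le hs) hs).trans_lt hft

theorem setIntegral_indicator_Iio_le {g : ℝ → ℝ} (hg0 : ∀ s, 0 ≤ g s)
    (hg : AntitoneOn g (Ioi 0)) {b : ℝ} (hb : 0 < b) (t : ℝ) :
    ∫ s in Ioc 0 t, (Iio b).indicator g s ≤ ∫ s in Ioc 0 t, g s := by
  by_cases hu : IntegrableOn ((Iio b).indicator g) (Ioc 0 t)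
  · have hg_int : IntegrableOn g (Ioc 0 t) := by
      have h1 : IntegrableOn g (Ioc 0 t ∩ Iio b) :=
        (hu.mono_set inter_subset_left).congr_fun (fun s hs => indicator_of_mem hs.2 g)
          (measurableSet_Ioc.inter measurableSet_Iio)
      have h2 : IntegrableOn g (Icc b t) :=
        (hg.mono fun s hs => hb.trans_le hs.1).integrableOn_isCompact isCompact_Icc
      refine (h1.union h2).mono_set fun s hs => ?_
      rcases lt_or_ge s b with hsb | hsb
      exacts [Or.inl ⟨hs, hsb⟩, Or.inr ⟨hsb, hs.2⟩]
    exact setIntegral_mono_on hu hg_int measurableSet_Ioc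
      fun s _ => indicator_le_self' (fun s _ => hg0 s) s
  · rw [integral_undef hu]
    exact setIntegral_nonneg measurableSet_Ioc fun s _ => hg0 s

section HalfLine

variable {x : ℝ → ℝ}

theorem muI_top : muI ⊤ = volume.restrict (Ioi 0) := by
  have : {s : ℝ | 0 ≤ s ∧ ENNReal.ofReal s < ⊤} = Ici 0 := by ext; simp
  rw [muI, this, Measure.restrict_congr_set Ioi_ae_eq_Ici]

theorem muI_top_apply (A : Set ℝ) : muI ⊤ A = volume (A ∩ Ioi 0) := by
  rw [muI_top, Measure.restrict_apply' measurableSet_Ioi]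

theorem ae_muI_top_pos : ∀ᵐ s ∂(muI ⊤), 0 < s := by
  rw [muI_top]
  exact ae_restrict_mem measurableSet_Ioi

theorem volume_setOf_pos_ofReal_lt (D : ℝ≥0∞) :
    volume {s : ℝ | 0 < s ∧ ENNReal.ofReal s < D} = D := by
  rcases eq_or_ne D ∞ with rfl | hD
  · simp only [ENNReal.ofReal_lt_top, and_true]
    exact Real.volume_Ioi
  · have : {s : ℝ | 0 < s ∧ ENNReal.ofReal s < D} = Ioo 0 D.toReal := by
      ext s
      simp only [mem_ofPred_eq, mem_Ioo]
      exact and_congr_right fun hs => ENNReal.ofReal_lt_iff_lt_toReal hs.le hD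
    rw [this, Real.volume_Ioo, sub_zero, ENNReal.ofReal_toReal hD]

theorem distr_rearr (hd : Tendsto (distr ⊤ x) atTop (𝓝 0)) :
    distr ⊤ (rearr ⊤ x) = distr ⊤ x := by
  funext lam
  rcases lt_or_ge lam 0 with hlam | hlam
  · rw [distr_of_neg hlam, distr_of_neg hlam]
  · rw [distr, muI_top_apply, setOf_lt_rearr_inter_Ioi hd hlam, volume_setOf_pos_ofReal_lt]

theorem distr_indicator_Iio_rearr (hd : Tendsto (distr ⊤ x) atTop (𝓝 0)) (b : ℝ) {lam : ℝ}
    (hlam : 0 ≤ lam) :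
    distr ⊤ ((Iio b).indicator (rearr ⊤ x)) lam = min (ENNReal.ofReal b) (distr ⊤ x lam) := by
  rw [distr, muI_top_apply, setOf_lt_abs_indicator hlam, inter_assoc,
    setOf_lt_rearr_inter_Ioi hd hlam, ← volume_setOf_pos_ofReal_lt (min _ _)]
  congr 1
  ext s
  simp only [mem_inter_iff, mem_Iio, mem_ofPred_eq, lt_min_iff]
  constructor
  · rintro ⟨hsb, hs, hsd⟩
    exact ⟨hs, (ENNReal.ofReal_lt_ofReal_iff_of_nonneg hs.le).2 hsb, hsd⟩
  · rintro ⟨hs, hsb, hsd⟩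
    exact ⟨(ENNReal.ofReal_lt_ofReal_iff_of_nonneg hs.le).1 hsb, hs, hsd⟩

theorem rearr_indicator_Iio_rearr (hd : Tendsto (distr ⊤ x) atTop (𝓝 0)) (b : ℝ) {t : ℝ}
    (ht : 0 < t) :
    rearr ⊤ ((Iio b).indicator (rearr ⊤ x)) t = (Iio b).indicator (rearr ⊤ x) t := by
  by_cases htb : t ∈ Iio b
  · rw [indicator_of_mem htb, rearr, rearr]
    congr 1
    ext lam
    refine and_congr_right fun hlam => ?_
    rw [distr_indicator_Iio_rearr hd b hlam.le, min_le_iff, or_iff_right]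
    exact not_le.2 ((ENNReal.ofReal_lt_ofReal_iff_of_nonneg ht.le).2 htb)
  · have hall : {lam | 0 < lam ∧ distr ⊤ ((Iio b).indicator (rearr ⊤ x)) lam ≤
        ENNReal.ofReal t} = Ioi 0 := by
      ext lam
      refine and_iff_left_of_imp fun hlam => ?_
      rw [distr_indicator_Iio_rearr hd b hlam.le]
      exact (min_le_left _ _).trans (ENNReal.ofReal_le_ofReal (not_lt.1 htb))
    rw [indicator_of_notMem htb, rearr, hall, csInf_Ioi]

theorem aemeasurable_rearr (hd : Tendsto (distr ⊤ x) atTop (𝓝 0)) :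
    AEMeasurable (rearr ⊤ x) (muI ⊤) := by
  rw [muI_top]
  exact aemeasurable_restrict_of_antitoneOn measurableSet_Ioi (rearr_antitoneOn hd)

theorem hlp_indicator_Iio_rearr (hd : Tendsto (distr ⊤ x) atTop (𝓝 0)) {b : ℝ} (hb : 0 < b) :
    HLP ⊤ ((Iio b).indicator (rearr ⊤ x)) x := by
  intro t ht
  rw [maxf, maxf, setIntegral_congr_fun measurableSet_Ioc
    fun s hs => rearr_indicator_Iio_rearr hd b hs.1]
  exact div_le_div_of_nonneg_right
    (setIntegral_indicator_Iio_le rearr_nonneg (rearr_antitoneOn hd) hb t) ht.le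

theorem distr_indicator_Ioi_const (b c : ℝ) :
    distr ⊤ ((Ioi b).indicator fun _ => c) = distr ⊤ fun _ => c := by
  funext lam
  rcases lt_or_ge lam 0 with hlam | hlam
  · rw [distr_of_neg hlam, distr_of_neg hlam]
  · rw [distr, setOf_lt_abs_indicator hlam, distr]
    by_cases hc : lam < |c|
    · simp [hc, muI_top_apply, Ioi_inter_Ioi]
    · simp [hc]

end HalfLine

namespace SymmetricBFS

theorem mem_indicator (E : SymmetricBFS α) {g : ℝ → ℝ} (hg : E.Mem g) {S : Set ℝ}
    (hS : MeasurableSet S) : E.Mem (S.indicator g) ∧ E.N (S.indicator g) ≤ E.N g :=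
  E.ideal ((E.mem_aemeasurable hg).indicator hS) hg
    (ae_of_all _ fun s => by simpa using norm_indicator_le_norm_self g s)

theorem tendsto_norm_indicator_Iio (E : SymmetricBFS α) {g : ℝ → ℝ} (hg : E.Mem g)
    (hg0 : ∀ s, 0 ≤ g s) :
    Tendsto (fun n : ℕ => E.N ((Iio ((n : ℝ) + 1)).indicator g)) atTop (𝓝 (E.N g)) := by
  have hmono : ∀ n : ℕ,
      (Iio ((n : ℝ) + 1)).indicator g ≤ (Iio (((n + 1 : ℕ) : ℝ) + 1)).indicator g :=
    fun n => indicator_le_indicator_of_subset (Iio_subset_Iio (by push_cast; linarith)) hg0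
  have hlim : ∀ s, Tendsto (fun n : ℕ => (Iio ((n : ℝ) + 1)).indicator g s) atTop (𝓝 (g s)) :=
    fun s => tendsto_atTop_of_eventually_const (i₀ := ⌈s⌉₊) fun n hn =>
      indicator_of_mem (mem_Iio.2 (by linarith [Nat.le_ceil s, (Nat.cast_le (α := ℝ)).2 hn])) g
  exact (E.fatou _ g (fun n => (E.mem_indicator hg measurableSet_Iio).1) (E.mem_aemeasurable hg)
    (fun n => ae_of_all _ (indicator_nonneg fun s _ => hg0 s)) (fun n => ae_of_all _ (hmono n))
    (ae_of_all _ hlim) ⟨E.N g, fun n => (E.mem_indicator hg measurableSet_Iio).2⟩).2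

variable {E : SymmetricBFS ⊤} {x : ℝ → ℝ}

theorem norm_const_le_norm_rearr_indicator_sub_rearr (hd : Tendsto (distr ⊤ x) atTop (𝓝 0))
    (hg : E.Mem (rearr ⊤ x)) {c : ℝ} (hc : E.Mem fun _ => c)
    (hcx : ∀ t, 0 < t → |c| ≤ rearr ⊤ x t) (b : ℝ) :
    E.N (fun _ => c) ≤ E.N (rearr ⊤ ((Iio b).indicator (rearr ⊤ x)) - rearr ⊤ x) := by
  have hy : rearr ⊤ ((Iio b).indicator (rearr ⊤ x)) - rearr ⊤ x =ᵐ[muI ⊤]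
      (Iio b).indicator (rearr ⊤ x) - rearr ⊤ x := by
    filter_upwards [ae_muI_top_pos] with s hs
    simp only [Pi.sub_apply, rearr_indicator_Iio_rearr hd b hs]
  have hy_mem : E.Mem (rearr ⊤ ((Iio b).indicator (rearr ⊤ x)) - rearr ⊤ x) := by
    refine (E.ideal ((((aemeasurable_rearr hd).indicator measurableSet_Iio).sub
      (aemeasurable_rearr hd)).congr hy.symm) hg ?_).1
    filter_upwards [hy] with s hs
    rw [hs]
    by_cases hsb : s ∈ Iio b <;> simp [hsb]
  have hw := aemeasurable_const (μ := muI ⊤) (b := c) |>.indicator (measurableSet_Ioi (a := b))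
  rw [← (E.symmetric hw hc (distr_indicator_Ioi_const b c)).2]
  refine (E.ideal hw hy_mem ?_).2
  filter_upwards [hy, ae_muI_top_pos] with s hs hs0
  rw [hs]
  by_cases hsb : s ∈ Ioi b
  · have hsb' : s ∉ Iio b := fun h => lt_asymm (mem_Ioi.1 hsb) (mem_Iio.1 h)
    simpa [hsb, hsb', abs_of_nonneg (rearr_nonneg s)] using hcx s hs0
  · simp [hsb]

theorem not_isLLUKMPoint_of_le_rearr (hx : E.Mem x) (hd : Tendsto (distr ⊤ x) atTop (𝓝 0))
    {c : ℝ} (hc : 0 < c) (hcx : ∀ t, 0 < t → c ≤ rearr ⊤ x t) : ¬ E.IsLLUKMPoint x := by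
  intro hLLUKM
  have hcx' : ∀ t, 0 < t → |c| ≤ rearr ⊤ x t := fun t ht => (abs_of_pos hc).trans_le (hcx t ht)
  obtain ⟨hg, hNg⟩ := E.symmetric (aemeasurable_rearr hd) hx (distr_rearr hd)
  have hconst : E.Mem fun _ => c := by
    refine (E.ideal aemeasurable_const hg ?_).1
    filter_upwards [ae_muI_top_pos] with s hs
    rw [abs_of_nonneg (rearr_nonneg s)]
    exact hcx' s hs
  have hpos : 0 < E.N fun _ => c := by
    refine (E.norm_nonneg' _).lt_of_ne' fun h0 => hc.ne' ?_
    have : (ae (muI ⊤)).NeBot := ae_neBot.2 fun h => by simpa [h] using muI_top_apply univ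
    exact eventually_const.1 ((E.norm_eq_zero_iff hconst).1 h0)
  have hlim := hLLUKM _ (fun n => (E.mem_indicator hg measurableSet_Iio).1)
    (fun n => hlp_indicator_Iio_rearr hd n.cast_add_one_pos)
    (hNg ▸ E.tendsto_norm_indicator_Iio hg rearr_nonneg)
  exact hpos.not_ge (ge_of_tendsto' hlim fun n =>
    norm_const_le_norm_rearr_indicator_sub_rearr hd hg hconst hcx' _)

end SymmetricBFS

theorem llukm_point_rearr_infty_zero_general (α : ℝ≥0∞)
    (E : SymmetricBFS α) (x : ℝ → ℝ) (hx : E.Mem x)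
    (hLLUKM : E.IsLLUKMPoint x) :
    rearrInftyZero α x := by
  rintro rfl
  by_cases htop : ∀ lam, 0 < lam → distr ⊤ x lam = ∞
  · rw [rearr_eq_zero_of_forall_distr_eq_top htop]
    exact tendsto_const_nhds
  push Not at htop
  obtain ⟨lam, -, hfin⟩ := htop
  have hd := tendsto_distr_atTop_zero (E.mem_aemeasurable hx) hfin
  refine tendsto_atTop_zero_of_antitoneOn (rearr_antitoneOn hd) rearr_nonneg fun c hc => ?_
  by_contra! hcx
  exact E.not_isLLUKMPoint_of_le_rearr hx hd hc hcx hLLUKM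

/-- If `x ∈ E` is an `LLUKM` point of a symmetric Banach function space `E`
on `I = [0, α)` (with the Fatou property), then `x*(∞) = 0`. -/
theorem llukm_point_rearr_infty_zero (α : ℝ≥0∞) (hα : α = 1 ∨ α = ∞)
    (E : SymmetricBFS α) (x : ℝ → ℝ) (hx : E.Mem x)
    (hLLUKM : E.IsLLUKMPoint x) :
    rearrInftyZero α x :=
  llukm_point_rearr_infty_zero_general α E x hx hLLUKM
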